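/- arXiv:2001.03955 — 3 statements merged into one kernel-verified Lean document; each statement's English description precedes it below -/
import Mathlib

section
/- Under any joint distribution on (Y,X,T) satisfying the Markov chain Y—X—T (i.e., p(y,x,t)=p_{XY}(x,y)·p_{T|X}(t|x)), the expected IB distortion equals the information loss about Y: E[d_IB(X,T)] := Σ_{x,t} p_{XT}(x,t)·KL(p_{Y|X}(·|x) ‖ p_{Y|T}(·|t)) = I(X;Y) − I(Y;T). Equivalently, E[d_IB(X,T)] = H(Y|T) − H(Y|X). -/
open Finset

noncomputable section

/-- `p` is a probability distribution on a finite set. -/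
def IsDist {A : Type*} [Fintype A] (p : A → ℝ) : Prop :=
  (∀ a, 0 ≤ p a) ∧ ∑ a, p a = 1

/-- `p` is a joint probability distribution on a product of finite sets (curried form). -/
def IsJoint {A B : Type*} [Fintype A] [Fintype B] (p : A → B → ℝ) : Prop :=
  (∀ a b, 0 ≤ p a b) ∧ ∑ a, ∑ b, p a b = 1

/-- `w` is a conditional probability distribution (a row-stochastic kernel). -/
def IsCond {A B : Type*} [Fintype A] [Fintype B] (w : A → B → ℝ) : Prop :=
  (∀ a b, 0 ≤ w a b) ∧ ∀ a, ∑ b, w a b = 1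

/-- Mutual information (natural logarithm) of a joint distribution given in curried form. -/
def mutualInfo {A B : Type*} [Fintype A] [Fintype B] (p : A → B → ℝ) : ℝ :=
  ∑ a, ∑ b, p a b * Real.log (p a b / ((∑ b', p a b') * (∑ a', p a' b)))

/-- Kullback–Leibler divergence (natural logarithm) between two distributions. -/
def klDiv {A : Type*} [Fintype A] (p q : A → ℝ) : ℝ :=
  ∑ a, p a * Real.log (p a / q a)

/-- Shannon entropy (natural logarithm). -/
def entropy {A : Type*} [Fintype A] (p : A → ℝ) : ℝ :=
  -∑ a, p a * Real.log (p a)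

variable {𝒳 𝒴 : Type*} [Fintype 𝒳] [Fintype 𝒴]

/-- Marginal on the first component of a joint distribution. -/
def margX (p : 𝒳 → 𝒴 → ℝ) (x : 𝒳) : ℝ := ∑ y, p x y

/-- Marginal on the second component of a joint distribution. -/
def margY (p : 𝒳 → 𝒴 → ℝ) (y : 𝒴) : ℝ := ∑ x, p x y

/-- Marginal distribution of the representation `U` induced by `p_{XY}` and `p_{U|X} = w`. -/
def pU {U : Type*} [Fintype U] (p : 𝒳 → 𝒴 → ℝ) (w : 𝒳 → U → ℝ) (u : U) : ℝ :=
  ∑ x, margX p x * w x u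

/-- Joint distribution of `(Y, U)` induced by `p_{XY}` and `p_{U|X} = w`
(Markov chain `Y — X — U`). -/
def pYU {U : Type*} [Fintype U] (p : 𝒳 → 𝒴 → ℝ) (w : 𝒳 → U → ℝ) (y : 𝒴) (u : U) : ℝ :=
  ∑ x, p x y * w x u

/-- The IB distortion `d_IB(x, u) = KL(p_{Y|X}(·|x) ‖ p_{Y|U}(·|u))`. -/
def dIB {U : Type*} [Fintype U] (p : 𝒳 → 𝒴 → ℝ) (w : 𝒳 → U → ℝ) (x : 𝒳) (u : U) : ℝ :=
  klDiv (fun y => p x y / margX p x) (fun y => pYU p w y u / pU p w u)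

/-- Expected IB distortion `E[d_IB(X, U)]`. -/
def EdIB {U : Type*} [Fintype U] (p : 𝒳 → 𝒴 → ℝ) (w : 𝒳 → U → ℝ) : ℝ :=
  ∑ x, ∑ u, margX p x * w x u * dIB p w x u

/-- Mutual information `I(X; U)` under the Markov chain `Y — X — U`. -/
def IXU {U : Type*} [Fintype U] (p : 𝒳 → 𝒴 → ℝ) (w : 𝒳 → U → ℝ) : ℝ :=
  mutualInfo (fun x u => margX p x * w x u)

/-- Mutual information `I(Y; U)` under the Markov chain `Y — X — U`. -/
def IYU {U : Type*} [Fintype U] (p : 𝒳 → 𝒴 → ℝ) (w : 𝒳 → U → ℝ) : ℝ :=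
  mutualInfo (fun y u => pYU p w y u)

/-- Conditional entropy `H(Y|X)` under the joint distribution `p`. -/
def condEntropyYX (p : 𝒳 → 𝒴 → ℝ) : ℝ :=
  -∑ x, ∑ y, p x y * Real.log (p x y / margX p x)

/-- Conditional entropy `H(Y|U)` under the joint distribution induced by `p` and `w`. -/
def condEntropyYU {U : Type*} [Fintype U] (p : 𝒳 → 𝒴 → ℝ) (w : 𝒳 → U → ℝ) : ℝ :=
  -∑ y, ∑ u, pYU p w y u * Real.log (pYU p w y u / pU p w u)

/-!
Expanding the divergence, `E[d_IB] = Σ p(x,y) p(t|x) (log p(y|x) - log p(y|t))`. Summing out `t`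
in the first term leaves `-H(Y|X)`; summing out `x` in the second turns `p(x,y) p(t|x)` into
`p(y,t)` and leaves `-H(Y|T)`. Both mutual informations are `H(Y)` minus the corresponding
conditional entropy, since `p(y,t)` has the same `Y`-marginal as `p`. Terms with
`p(x,y) p(t|x) = 0` vanish on both sides, which makes the divisions by zero harmless.
-/

omit [Fintype 𝒳] in
lemma le_margX (p : 𝒳 → 𝒴 → ℝ) (hp : ∀ x y, 0 ≤ p x y) (x : 𝒳) (y : 𝒴) : p x y ≤ margX p x :=
  single_le_sum (fun y' _ => hp x y') (mem_univ y)

omit [Fintype 𝒴] in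
lemma le_margY (p : 𝒳 → 𝒴 → ℝ) (hp : ∀ x y, 0 ≤ p x y) (x : 𝒳) (y : 𝒴) : p x y ≤ margY p y :=
  single_le_sum (fun x' _ => hp x' y) (mem_univ x)

lemma mul_log_div_mul_eq {a b c : ℝ} (ha : 0 ≤ a) (hab : a ≤ b) (hac : a ≤ c) :
    a * Real.log (a / (b * c)) = a * Real.log (a / b) - a * Real.log c := by
  rcases ha.eq_or_lt with rfl | ha
  · simp
  · rw [div_mul_eq_div_div, Real.log_div (div_pos ha (by linarith)).ne' (by linarith)]
    ring

lemma mul_mul_div_mul_log_div_div_eq {a m w r s : ℝ} (ha : 0 ≤ a) (ham : a ≤ m) (hw : 0 ≤ w)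
    (har : a * w ≤ r) (hrs : r ≤ s) :
    m * w * (a / m * Real.log (a / m / (r / s))) =
      a * w * Real.log (a / m) - a * w * Real.log (r / s) := by
  rcases (mul_nonneg ha hw).eq_or_lt with haw | haw
  · rcases mul_eq_zero.mp haw.symm with rfl | rfl <;> simp
  · have ha : 0 < a := pos_of_mul_pos_left haw hw
    have hw : 0 < w := pos_of_mul_pos_right haw ha.le
    have hm : 0 < m := ha.trans_le ham
    have hr : 0 < r := haw.trans_le har
    rw [Real.log_div (div_pos ha hm).ne' (div_pos hr (hr.trans_le hrs)).ne']
    field_simp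

lemma mutualInfo_swap (p : 𝒳 → 𝒴 → ℝ) : mutualInfo (fun y x => p x y) = mutualInfo p := by
  unfold mutualInfo
  rw [sum_comm]
  simp only [mul_comm (∑ x', p x' _)]

lemma mutualInfo_eq_entropy_sub_condEntropyYX (p : 𝒳 → 𝒴 → ℝ) (hp : ∀ x y, 0 ≤ p x y) :
    mutualInfo p = entropy (margY p) - condEntropyYX p := by
  have hsplit : ∀ x y, p x y * Real.log (p x y / ((∑ y', p x y') * ∑ x', p x' y)) =
      p x y * Real.log (p x y / margX p x) - p x y * Real.log (margY p y) := fun x y =>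
    mul_log_div_mul_eq (hp x y) (le_margX p hp x y) (le_margY p hp x y)
  have hcross :
      ∑ x, ∑ y, p x y * Real.log (margY p y) = ∑ y, margY p y * Real.log (margY p y) := by
    rw [sum_comm]
    simp only [← sum_mul, margY]
  unfold mutualInfo entropy condEntropyYX
  simp only [hsplit, sum_sub_distrib, hcross]
  ring

section Markov

variable {𝒯 : Type*} [Fintype 𝒯]

omit [Fintype 𝒴] in
lemma margX_pYU (p : 𝒳 → 𝒴 → ℝ) (w : 𝒳 → 𝒯 → ℝ) (hw : ∀ x, ∑ t, w x t = 1) :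
    margX (pYU p w) = margY p := by
  ext y
  unfold margX pYU margY
  rw [sum_comm]
  simp only [← mul_sum, hw, mul_one]

lemma margY_pYU (p : 𝒳 → 𝒴 → ℝ) (w : 𝒳 → 𝒯 → ℝ) : margY (pYU p w) = pU p w := by
  ext t
  unfold margY pYU pU margX
  rw [sum_comm]
  simp only [← sum_mul]

lemma condEntropyYU_eq_condEntropyYX_swap (p : 𝒳 → 𝒴 → ℝ) (w : 𝒳 → 𝒯 → ℝ) :
    condEntropyYU p w = condEntropyYX (fun t y => pYU p w y t) := by
  unfold condEntropyYU condEntropyYX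
  rw [sum_comm, ← margY_pYU]
  rfl

lemma IYU_eq_entropy_sub_condEntropyYU (p : 𝒳 → 𝒴 → ℝ) (hp : ∀ x y, 0 ≤ p x y)
    (w : 𝒳 → 𝒯 → ℝ) (hw : IsCond w) :
    IYU p w = entropy (margY p) - condEntropyYU p w := by
  have hpYU : ∀ t y, 0 ≤ pYU p w y t := fun t y =>
    sum_nonneg fun x _ => mul_nonneg (hp x y) (hw.1 x t)
  rw [IYU, ← mutualInfo_swap, mutualInfo_eq_entropy_sub_condEntropyYX _ hpYU,
    condEntropyYU_eq_condEntropyYX_swap]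
  congr 2
  exact margX_pYU p w hw.2

lemma EdIB_eq_condEntropyYU_sub_condEntropyYX (p : 𝒳 → 𝒴 → ℝ) (hp : ∀ x y, 0 ≤ p x y)
    (w : 𝒳 → 𝒯 → ℝ) (hw : IsCond w) :
    EdIB p w = condEntropyYU p w - condEntropyYX p := by
  have hpYU : ∀ x y t, p x y * w x t ≤ pYU p w y t := fun x y t =>
    single_le_sum (fun x' _ => mul_nonneg (hp x' y) (hw.1 x' t)) (mem_univ x)
  have hpU : ∀ y t, pYU p w y t ≤ pU p w t := fun y t => by
    rw [← margY_pYU]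
    exact le_margY (pYU p w) (fun y t => sum_nonneg fun x _ =>
      mul_nonneg (hp x y) (hw.1 x t)) y t
  have hsplit : ∀ x t, margX p x * w x t * dIB p w x t = ∑ y,
      (p x y * w x t * Real.log (p x y / margX p x) -
        p x y * w x t * Real.log (pYU p w y t / pU p w t)) := fun x t => by
    rw [dIB, klDiv, mul_sum]
    exact sum_congr rfl fun y _ => mul_mul_div_mul_log_div_div_eq (hp x y) (le_margX p hp x y)
      (hw.1 x t) (hpYU x y t) (hpU y t)
  have hYX :
      ∑ x, ∑ t, ∑ y, p x y * w x t * Real.log (p x y / margX p x) = -condEntropyYX p := by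
    rw [condEntropyYX, neg_neg]
    refine sum_congr rfl fun x _ => ?_
    rw [sum_comm]
    exact sum_congr rfl fun y _ => by rw [← sum_mul, ← mul_sum, hw.2 x, mul_one]
  have hYT : ∑ x, ∑ t, ∑ y, p x y * w x t * Real.log (pYU p w y t / pU p w t) =
      -condEntropyYU p w := by
    rw [condEntropyYU, neg_neg]
    calc _ = ∑ t, ∑ y, ∑ x, p x y * w x t * Real.log (pYU p w y t / pU p w t) := by
          rw [sum_comm]
          exact sum_congr rfl fun t _ => sum_comm
      _ = _ := by
          rw [sum_comm]
          simp only [pYU, sum_mul]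
  simp only [EdIB, hsplit, sum_sub_distrib, hYX, hYT]
  ring

end Markov

theorem expected_dIB_eq_info_loss_general
    {𝒳 𝒴 𝒯 : Type*} [Fintype 𝒳] [Fintype 𝒴] [Fintype 𝒯]
    (p : 𝒳 → 𝒴 → ℝ) (hp : IsJoint p)
    (w : 𝒳 → 𝒯 → ℝ) (hw : IsCond w) :
    EdIB p w = mutualInfo p - IYU p w ∧
    EdIB p w = condEntropyYU p w - condEntropyYX p := by
  have hEdIB := EdIB_eq_condEntropyYU_sub_condEntropyYX p hp.1 w hw
  refine ⟨?_, hEdIB⟩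
  rw [hEdIB, mutualInfo_eq_entropy_sub_condEntropyYX p hp.1,
    IYU_eq_entropy_sub_condEntropyYU p hp.1 w hw]
  ring

/-- Under any joint distribution on `(Y, X, T)` satisfying the Markov chain `Y — X — T`
(i.e. `p(y,x,t) = p_{XY}(x,y) · p_{T|X}(t|x)`), the expected IB distortion equals the
information loss about `Y`:
`E[d_IB(X,T)] = Σ_{x,t} p_{XT}(x,t) · KL(p_{Y|X}(·|x) ‖ p_{Y|T}(·|t)) = I(X;Y) − I(Y;T)`.
Equivalently, `E[d_IB(X,T)] = H(Y|T) − H(Y|X)`. -/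
theorem expected_dIB_eq_info_loss
    {𝒳 𝒴 𝒯 : Type*} [Fintype 𝒳] [Fintype 𝒴] [Fintype 𝒯]
    (p : 𝒳 → 𝒴 → ℝ) (hp : IsJoint p) (hX : ∀ x, 0 < margX p x)
    (w : 𝒳 → 𝒯 → ℝ) (hw : IsCond w) :
    EdIB p w = mutualInfo p - IYU p w ∧
    EdIB p w = condEntropyYU p w - condEntropyYX p :=
  expected_dIB_eq_info_loss_general p hp w hw
end
end

section
/- (Joint typicality lemma, lower bound.) Let (X,Y) ∼ p_{XY} on finite sets 𝒳×𝒴, and let 0 < ε' < ε. Then there exists δ(ε) with δ(ε) → 0 as ε → 0 such that for every x^n ∈ S_{ε'}^n(X) and Y^n drawn i.i.d. from the marginal p_Y (independently of x^n), P{ (x^n, Y^n) ∈ S_ε^n(X,Y) } ≥ 2^{−n(I(X;Y)+δ(ε))} for all sufficiently large n. -/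
open Finset

noncomputable section

variable {𝒳 𝒴 : Type*} [Fintype 𝒳] [Fintype 𝒴]

/-- Mutual information in bits (logarithm base 2) of a joint distribution in curried form. -/
def mutualInfo2 {A B : Type*} [Fintype A] [Fintype B] (p : A → B → ℝ) : ℝ :=
  ∑ a, ∑ b, p a b * Real.logb 2 (p a b / ((∑ b', p a b') * (∑ a', p a' b)))

/-- Kullback–Leibler divergence in bits (logarithm base 2). -/
def klDiv2 {A : Type*} [Fintype A] (p q : A → ℝ) : ℝ :=
  ∑ a, p a * Real.logb 2 (p a / q a)

/-- Shannon entropy in bits (logarithm base 2). -/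
def entropy2 {A : Type*} [Fintype A] (p : A → ℝ) : ℝ :=
  -∑ a, p a * Real.logb 2 (p a)

/-- The IB distortion in bits: `d_IB(x, u) = KL(p_{Y|X}(·|x) ‖ p_{Y|U}(·|u))`. -/
def dIB2 {𝒳 𝒴 U : Type*} [Fintype 𝒳] [Fintype 𝒴] [Fintype U]
    (p : 𝒳 → 𝒴 → ℝ) (w : 𝒳 → U → ℝ) (x : 𝒳) (u : U) : ℝ :=
  klDiv2 (fun y => p x y / margX p x) (fun y => pYU p w y u / pU p w u)

/-- Expected IB distortion in bits, `E[d_IB(X, U)]`. -/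
def EdIB2 {𝒳 𝒴 U : Type*} [Fintype 𝒳] [Fintype 𝒴] [Fintype U]
    (p : 𝒳 → 𝒴 → ℝ) (w : 𝒳 → U → ℝ) : ℝ :=
  ∑ x, ∑ u, margX p x * w x u * dIB2 p w x u

/-- Mutual information `I(X; U)` in bits under the Markov chain `Y — X — U`. -/
def IXU2 {𝒳 𝒴 U : Type*} [Fintype 𝒳] [Fintype 𝒴] [Fintype U]
    (p : 𝒳 → 𝒴 → ℝ) (w : 𝒳 → U → ℝ) : ℝ :=
  mutualInfo2 (fun x u => margX p x * w x u)

/-- Mutual information `I(Y; U)` in bits under the Markov chain `Y — X — U`. -/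
def IYU2 {𝒳 𝒴 U : Type*} [Fintype 𝒳] [Fintype 𝒴] [Fintype U]
    (p : 𝒳 → 𝒴 → ℝ) (w : 𝒳 → U → ℝ) : ℝ :=
  mutualInfo2 (fun y u => pYU p w y u)

/-- The empirical distribution `π(x|x^n) = (1/n)·|{i : xᵢ = x}|` of a sequence `x^n`. -/
def empDist {𝒳 : Type*} [Fintype 𝒳] [DecidableEq 𝒳] {n : ℕ} (xs : Fin n → 𝒳) (x : 𝒳) : ℝ :=
  (n : ℝ)⁻¹ * (Finset.univ.filter fun i => xs i = x).card

/-- The ε-typical set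
`S_ε^n(X) = { x^n : |π(x|x^n) − p_X(x)| ≤ ε·p_X(x) for all x }`. -/
def typSet {𝒳 : Type*} [Fintype 𝒳] [DecidableEq 𝒳] (pX : 𝒳 → ℝ) (ε : ℝ) (n : ℕ) :
    Set (Fin n → 𝒳) :=
  {xs | ∀ x, |empDist xs x - pX x| ≤ ε * pX x}

/-- The empirical joint distribution `π(x,y|x^n,y^n) = (1/n)·|{i : xᵢ = x, yᵢ = y}|`. -/
def empDist2 {𝒳 𝒴 : Type*} [Fintype 𝒳] [Fintype 𝒴] [DecidableEq 𝒳] [DecidableEq 𝒴] {n : ℕ}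
    (xs : Fin n → 𝒳) (ys : Fin n → 𝒴) (x : 𝒳) (y : 𝒴) : ℝ :=
  (n : ℝ)⁻¹ * (Finset.univ.filter fun i => xs i = x ∧ ys i = y).card

/-- The jointly ε-typical set
`S_ε^n(X,Y) = { (x^n,y^n) : |π(x,y|x^n,y^n) − p_{XY}(x,y)| ≤ ε·p_{XY}(x,y) for all (x,y) }`. -/
def typSet2 {𝒳 𝒴 : Type*} [Fintype 𝒳] [Fintype 𝒴] [DecidableEq 𝒳] [DecidableEq 𝒴]
    (p : 𝒳 → 𝒴 → ℝ) (ε : ℝ) (n : ℕ) : Set ((Fin n → 𝒳) × (Fin n → 𝒴)) :=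
  {q | ∀ x y, |empDist2 q.1 q.2 x y - p x y| ≤ ε * p x y}

/-!
Given `x^n`, the law of `Y^n` conditioned on `X^n = x^n` is the product `Q` of the kernels
`p_{Y|X}(·|xᵢ)`. On a jointly typical pair the ratio `p_Y^n(y^n) / Q(y^n)` equals
`2^{-∑ᵢ i(xᵢ;yᵢ)}`, where `i = log₂ (p_{XY} / (p_X p_Y))` is the information density, and typicality
forces `∑ᵢ i(xᵢ;yᵢ) ≤ n (I(X;Y) + ε E|i|)`. So it suffices that `Q` gives the jointly typical set
mass at least `1/2`. Under `Q` the number of visits of a cell `(x,y)` is a sum of independent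
Bernoulli variables over the positions with `xᵢ = x`; since `x^n` is `ε'`-typical its mean is within
`ε' n p(x,y)` of `n p(x,y)`, so Chebyshev bounds the chance of an `ε`-atypical count by
`O(1/(n (ε-ε')² p(x,y)²))`. The extra `ε` in `δ(ε) = ε (E|i| + 1)` absorbs the factor `1/2`.
-/

section ProductKernel

variable {ι α : Type*} [Fintype ι] [DecidableEq ι] [Fintype α]

theorem sum_prod_mul_prod_eq_prod_sum (q g : ι → α → ℝ) (hq : ∀ i, ∑ a, q i a = 1)
    (S : Finset ι) :
    ∑ f : ι → α, (∏ i, q i (f i)) * ∏ i ∈ S, g i (f i) = ∏ i ∈ S, ∑ a, q i a * g i a := by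
  have hrow : ∀ i, ∑ a, q i a * (if i ∈ S then g i a else 1)
      = if i ∈ S then ∑ a, q i a * g i a else 1 := fun i => by
    split_ifs <;> simp [hq]
  rw [← Finset.prod_ite_mem_eq, Finset.prod_congr rfl fun i _ => (hrow i).symm,
    Fintype.prod_sum]
  refine Finset.sum_congr rfl fun f _ => ?_
  rw [Finset.prod_mul_distrib, Finset.prod_ite_mem_eq]

theorem sum_prod_eq_one (q : ι → α → ℝ) (hq : ∀ i, ∑ a, q i a = 1) :
    ∑ f : ι → α, ∏ i, q i (f i) = 1 := by
  simp [← Fintype.prod_sum, hq]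

theorem sum_prod_mul_sq_sum_eq (q g : ι → α → ℝ) (hq : ∀ i, ∑ a, q i a = 1)
    (hg : ∀ i, ∑ a, q i a * g i a = 0) (S : Finset ι) :
    ∑ f : ι → α, (∏ i, q i (f i)) * (∑ i ∈ S, g i (f i)) ^ 2
      = ∑ i ∈ S, ∑ a, q i a * g i a ^ 2 := by
  have hpair : ∀ i j, ∑ f : ι → α, (∏ k, q k (f k)) * (g i (f i) * g j (f j))
      = if i = j then ∑ a, q i a * g i a ^ 2 else 0 := fun i j => by
    split_ifs with hij
    · subst hij
      simpa only [Finset.prod_singleton, ← sq] using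
        sum_prod_mul_prod_eq_prod_sum q (fun _ a => g i a ^ 2) hq {i}
    · simpa [Finset.prod_pair hij, hg] using sum_prod_mul_prod_eq_prod_sum q g hq {i, j}
  simp_rw [sq (Finset.sum _ _), Finset.sum_mul_sum, Finset.mul_sum]
  rw [Finset.sum_comm]
  refine Finset.sum_congr rfl fun i hi => ?_
  rw [Finset.sum_comm]
  simp only [hpair, Finset.sum_ite_eq, if_pos hi]

theorem sum_prod_mul_sq_card_filter_sub_le [DecidableEq α] (q : ι → α → ℝ)
    (hq0 : ∀ i a, 0 ≤ q i a) (hq : ∀ i, ∑ a, q i a = 1) (S : Finset ι) (b : α) :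
    ∑ f : ι → α, (∏ i, q i (f i)) * ((#{i ∈ S | f i = b} : ℝ) - ∑ i ∈ S, q i b) ^ 2 ≤ #S := by
  set g : ι → α → ℝ := fun i a => (if a = b then 1 else 0) - q i b
  have hg : ∀ i, ∑ a, q i a * g i a = 0 := fun i => by
    simp [g, mul_sub, ← Finset.sum_mul, hq]
  have hcount : ∀ f : ι → α, (#{i ∈ S | f i = b} : ℝ) - ∑ i ∈ S, q i b = ∑ i ∈ S, g i (f i) :=
    fun f => by simp only [g, Finset.sum_sub_distrib, Finset.natCast_card_filter]
  have hqb : ∀ i, q i b ≤ 1 := fun i =>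
    hq i ▸ Finset.single_le_sum (fun a _ => hq0 i a) (Finset.mem_univ b)
  have hg_sq : ∀ i a, g i a ^ 2 ≤ 1 := fun i a => by
    simp only [g]
    split_ifs <;> nlinarith [hq0 i b, hqb i]
  simp_rw [hcount, sum_prod_mul_sq_sum_eq q g hq hg]
  calc ∑ i ∈ S, ∑ a, q i a * g i a ^ 2 ≤ ∑ i ∈ S, ∑ a, q i a :=
        Finset.sum_le_sum fun i _ => Finset.sum_le_sum fun a _ =>
          mul_le_of_le_one_right (hq0 i a) (hg_sq i a)
    _ = #S := by simp [hq]

end ProductKernel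

theorem sum_filter_le_abs_le_div_sq {β : Type*} [Fintype β] (Q X : β → ℝ) (hQ : ∀ b, 0 ≤ Q b)
    {a : ℝ} (ha : 0 < a) :
    ∑ b with a ≤ |X b|, Q b ≤ (∑ b, Q b * X b ^ 2) / a ^ 2 := by
  rw [le_div_iff₀ (by positivity), Finset.sum_mul]
  calc ∑ b with a ≤ |X b|, Q b * a ^ 2 ≤ ∑ b with a ≤ |X b|, Q b * X b ^ 2 :=
        Finset.sum_le_sum fun b hb => mul_le_mul_of_nonneg_left
          (sq_abs (X b) ▸ pow_le_pow_left₀ ha.le (Finset.mem_filter.1 hb).2 2) (hQ b)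
    _ ≤ ∑ b, Q b * X b ^ 2 := Finset.sum_le_sum_of_subset_of_nonneg (Finset.filter_subset _ _)
        fun b _ _ => mul_nonneg (hQ b) (sq_nonneg _)

theorem sum_filter_not_forall_le {β γ : Type*} [Fintype β] [Fintype γ] (Q : β → ℝ)
    (hQ : ∀ b, 0 ≤ Q b) (P : γ → β → Prop) [∀ c b, Decidable (P c b)] :
    ∑ b with ¬ ∀ c, P c b, Q b ≤ ∑ c, ∑ b with ¬ P c b, Q b := by
  simp_rw [Finset.sum_filter]
  rw [Finset.sum_comm]
  refine Finset.sum_le_sum fun b _ => ?_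
  have hterm : ∀ c, 0 ≤ if ¬ P c b then Q b else 0 := fun c => by split_ifs <;> simp [hQ]
  by_cases h : ∀ c, P c b
  · rw [if_neg (not_not.mpr h)]
    exact Finset.sum_nonneg fun c _ => hterm c
  · obtain ⟨c, hc⟩ := not_forall.mp h
    rw [if_pos h]
    exact (if_pos hc).symm.le.trans
      (Finset.single_le_sum (fun c _ => hterm c) (Finset.mem_univ c))

theorem pos_of_abs_sub_le_mul {π p ε : ℝ} (hε : 0 ≤ ε) (hπ : 0 < π) (h : |π - p| ≤ ε * p) :
    0 < p := by
  by_contra! hp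
  linarith [le_abs_self (π - p), mul_nonpos_of_nonneg_of_nonpos hε hp]

def condKernel (p : 𝒳 → 𝒴 → ℝ) (x : 𝒳) (y : 𝒴) : ℝ := p x y / margX p x

def infoDensity (p : 𝒳 → 𝒴 → ℝ) (x : 𝒳) (y : 𝒴) : ℝ :=
  Real.logb 2 (p x y / (margX p x * margY p y))

theorem sum_condKernel {α β : Type*} [Fintype β] {p : α → β → ℝ} {x : α} (hx : 0 < margX p x) :
    ∑ y, condKernel p x y = 1 := by
  simp only [condKernel, ← Finset.sum_div]
  exact div_self hx.ne'

theorem mutualInfo2_eq_sum_infoDensity (p : 𝒳 → 𝒴 → ℝ) :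
    mutualInfo2 p = ∑ x, ∑ y, p x y * infoDensity p x y := rfl

theorem condKernel_mul_rpow_neg_infoDensity {p : 𝒳 → 𝒴 → ℝ} {x : 𝒳} {y : 𝒴}
    (hxy : 0 < p x y) (hx : 0 < margX p x) (hy : 0 < margY p y) :
    condKernel p x y * (2 : ℝ) ^ (-infoDensity p x y) = margY p y := by
  rw [infoDensity, Real.rpow_neg zero_le_two, Real.rpow_logb two_pos (by norm_num) (by positivity),
    condKernel]
  field_simp

section Typicality

variable [DecidableEq 𝒳] [DecidableEq 𝒴] {n : ℕ}

theorem empDist_apply_self_pos (xs : Fin n → 𝒳) (i : Fin n) : 0 < empDist xs (xs i) := by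
  have : 0 < #{j | xs j = xs i} := Finset.card_pos.2 ⟨i, by simp⟩
  unfold empDist
  have := i.pos
  positivity

theorem empDist2_apply_self_pos (xs : Fin n → 𝒳) (ys : Fin n → 𝒴) (i : Fin n) :
    0 < empDist2 xs ys (xs i) (ys i) := by
  have : 0 < #{j | xs j = xs i ∧ ys j = ys i} := Finset.card_pos.2 ⟨i, by simp⟩
  unfold empDist2
  have := i.pos
  positivity

theorem pos_of_mem_typSet {pX : 𝒳 → ℝ} {ε : ℝ} (hε : 0 ≤ ε) {xs : Fin n → 𝒳}
    (hxs : xs ∈ typSet pX ε n) (i : Fin n) : 0 < pX (xs i) :=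
  pos_of_abs_sub_le_mul hε (empDist_apply_self_pos xs i) (hxs (xs i))

theorem pos_of_mem_typSet2 {p : 𝒳 → 𝒴 → ℝ} {ε : ℝ} (hε : 0 ≤ ε) {xs : Fin n → 𝒳}
    {ys : Fin n → 𝒴} (h : (xs, ys) ∈ typSet2 p ε n) (i : Fin n) : 0 < p (xs i) (ys i) :=
  pos_of_abs_sub_le_mul hε (empDist2_apply_self_pos xs ys i) (h (xs i) (ys i))

theorem sum_eq_mul_sum_empDist2 (xs : Fin n → 𝒳) (ys : Fin n → 𝒴) (g : 𝒳 → 𝒴 → ℝ) :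
    ∑ i, g (xs i) (ys i) = n * ∑ x, ∑ y, empDist2 xs ys x y * g x y := by
  rcases Nat.eq_zero_or_pos n with rfl | hn
  · simp
  have hfiber : ∑ i, g (xs i) (ys i) = ∑ x, ∑ y, ∑ i with xs i = x ∧ ys i = y, g x y := by
    rw [← Finset.sum_fiberwise _ xs]
    refine Finset.sum_congr rfl fun x _ => ?_
    rw [← Finset.sum_fiberwise _ ys]
    refine Finset.sum_congr rfl fun y _ => ?_
    rw [Finset.filter_filter]
    exact Finset.sum_congr rfl fun i hi => by simp_all
  simp only [hfiber, Finset.sum_const, nsmul_eq_mul, Finset.mul_sum, empDist2]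
  field_simp

theorem rpow_mul_prod_condKernel_le_prod_margY {p : 𝒳 → 𝒴 → ℝ} (hp0 : ∀ x y, 0 ≤ p x y)
    {ε : ℝ} (hε : 0 ≤ ε) {xs : Fin n → 𝒳} {ys : Fin n → 𝒴} (h : (xs, ys) ∈ typSet2 p ε n) :
    (2 : ℝ) ^ (-(n : ℝ) * (mutualInfo2 p + ε * ∑ x, ∑ y, p x y * |infoDensity p x y|)) *
        ∏ i, condKernel p (xs i) (ys i) ≤ ∏ i, margY p (ys i) := by
  have hpos := pos_of_mem_typSet2 hε h
  have hprod : ∏ i, margY p (ys i) =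
      (2 : ℝ) ^ (-∑ i, infoDensity p (xs i) (ys i)) * ∏ i, condKernel p (xs i) (ys i) := by
    rw [← Finset.sum_neg_distrib, Real.rpow_sum_of_pos two_pos, ← Finset.prod_mul_distrib]
    refine Finset.prod_congr rfl fun i _ => ?_
    rw [mul_comm, condKernel_mul_rpow_neg_infoDensity (hpos i)
      ((hpos i).trans_le (Finset.single_le_sum (fun y _ => hp0 _ y) (Finset.mem_univ _)))
      ((hpos i).trans_le (Finset.single_le_sum (fun x _ => hp0 x _) (Finset.mem_univ _)))]
  have hcell : ∀ x y, empDist2 xs ys x y * infoDensity p x y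
      ≤ p x y * infoDensity p x y + ε * (p x y * |infoDensity p x y|) := fun x y => by
    have hdev := mul_le_mul_of_nonneg_right (h x y) (abs_nonneg (infoDensity p x y))
    calc empDist2 xs ys x y * infoDensity p x y
        = p x y * infoDensity p x y + (empDist2 xs ys x y - p x y) * infoDensity p x y := by ring
      _ ≤ p x y * infoDensity p x y + |empDist2 xs ys x y - p x y| * |infoDensity p x y| := by
        rw [← abs_mul]; gcongr; exact le_abs_self _
      _ ≤ _ := by linarith [hdev]
  have hsum : ∑ i, infoDensity p (xs i) (ys i)
      ≤ n * (mutualInfo2 p + ε * ∑ x, ∑ y, p x y * |infoDensity p x y|) := by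
    rw [sum_eq_mul_sum_empDist2, mutualInfo2_eq_sum_infoDensity]
    refine mul_le_mul_of_nonneg_left ?_ n.cast_nonneg
    simp_rw [Finset.mul_sum, ← Finset.sum_add_distrib]
    exact Finset.sum_le_sum fun x _ => Finset.sum_le_sum fun y _ => hcell x y
  rw [hprod]
  gcongr
  · exact Finset.prod_nonneg fun i _ => div_nonneg (hp0 _ _) (Finset.sum_nonneg fun y _ => hp0 _ y)
  · exact one_le_two
  · linarith

theorem sum_prod_condKernel_eq_zero_of_visits {p : 𝒳 → 𝒴 → ℝ} {x : 𝒳} {y : 𝒴} (hxy : p x y = 0)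
    (xs : Fin n → 𝒳) (T : Finset (Fin n → 𝒴)) (hT : ∀ ys ∈ T, empDist2 xs ys x y ≠ 0) :
    ∑ ys ∈ T, ∏ i, condKernel p (xs i) (ys i) = 0 := by
  refine Finset.sum_eq_zero fun ys hys => ?_
  obtain ⟨i, hi⟩ : ∃ i, xs i = x ∧ ys i = y := by
    by_contra! hnone
    exact hT ys hys <| by
      simp [empDist2, Finset.filter_false_of_mem fun i _ => not_and.2 (hnone i)]
  refine Finset.prod_eq_zero (Finset.mem_univ i) ?_
  rw [hi.1, hi.2, condKernel, hxy, zero_div]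

theorem le_abs_empDist2_sub_of_not_le {p : 𝒳 → 𝒴 → ℝ} {x : 𝒳} {y : 𝒴} (hpx : 0 < margX p x)
    (hxy : 0 ≤ p x y) {ε ε' : ℝ} {xs : Fin n → 𝒳} {ys : Fin n → 𝒴}
    (hx : |empDist xs x - margX p x| ≤ ε' * margX p x)
    (hxys : ¬ |empDist2 xs ys x y - p x y| ≤ ε * p x y) :
    (ε - ε') * p x y ≤ |empDist2 xs ys x y - empDist xs x * condKernel p x y| := by
  have hw0 : 0 ≤ condKernel p x y := div_nonneg hxy hpx.le
  have hwp : margX p x * condKernel p x y = p x y := mul_div_cancel₀ _ hpx.ne'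
  have hnear : |empDist xs x * condKernel p x y - p x y| ≤ ε' * p x y := by
    rw [← hwp, ← sub_mul, abs_mul, abs_of_nonneg hw0, ← mul_assoc]
    exact mul_le_mul_of_nonneg_right hx hw0
  have htri := abs_sub_abs_le_abs_sub (empDist2 xs ys x y - p x y)
    (empDist xs x * condKernel p x y - p x y)
  rw [sub_sub_sub_cancel_right] at htri
  linarith [not_le.1 hxys]

theorem sum_prod_condKernel_not_typical_cell_le {p : 𝒳 → 𝒴 → ℝ} (hp0 : ∀ x y, 0 ≤ p x y)
    {ε ε' : ℝ} (hε' : 0 ≤ ε') (hε'ε : ε' < ε) (hn : 0 < n) {xs : Fin n → 𝒳}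
    (hxs : xs ∈ typSet (margX p) ε' n) (x : 𝒳) (y : 𝒴) :
    ∑ ys : Fin n → 𝒴 with ¬ |empDist2 xs ys x y - p x y| ≤ ε * p x y,
        ∏ i, condKernel p (xs i) (ys i) ≤ ((ε - ε') ^ 2 * p x y ^ 2)⁻¹ / n := by
  -- a null cell is never visited, and the bound reads `0⁻¹ / n = 0`
  rcases (hp0 x y).eq_or_lt with hxy | hxy
  · refine (sum_prod_condKernel_eq_zero_of_visits hxy.symm xs _ fun ys hys h0 => ?_).trans_le
      (by simp [← hxy])
    simp [h0, ← hxy] at hys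
  set q : Fin n → 𝒴 → ℝ := fun i => condKernel p (xs i)
  have hX := pos_of_mem_typSet hε' hxs
  have hq0 : ∀ i y, 0 ≤ q i y := fun i y => div_nonneg (hp0 _ _) (hX i).le
  have hq : ∀ i, ∑ y, q i y = 1 := fun i => sum_condKernel (hX i)
  have hQ0 : ∀ ys : Fin n → 𝒴, 0 ≤ ∏ i, q i (ys i) := fun ys =>
    Finset.prod_nonneg fun i _ => hq0 i _
  have hpx : 0 < margX p x := hxy.trans_le (Finset.single_le_sum (fun y _ => hp0 x y) (mem_univ y))
  set S : Finset (Fin n) := {i | xs i = x}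
  set X : (Fin n → 𝒴) → ℝ := fun ys => (#{i ∈ S | ys i = y} : ℝ) - ∑ i ∈ S, q i y
  have hXemp : ∀ ys, X ys = n * (empDist2 xs ys x y - empDist xs x * condKernel p x y) := by
    intro ys
    have hmean : ∑ i ∈ S, q i y = #S * condKernel p x y := by
      rw [Finset.sum_congr rfl fun i hi => show q i y = condKernel p x y by
        simp only [q, show xs i = x by simpa [S] using hi], Finset.sum_const, nsmul_eq_mul]
    simp only [X, hmean, empDist2, empDist, S, Finset.filter_filter]
    field_simp
  set a := (ε - ε') * p x y * n with ha_def
  have ha : 0 < a := by have := sub_pos.2 hε'ε; positivity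
  have hdev : ∀ ys : Fin n → 𝒴, ¬ |empDist2 xs ys x y - p x y| ≤ ε * p x y → a ≤ |X ys| :=
    fun ys hys => by
      rw [hXemp, abs_mul, Nat.abs_cast, ha_def, mul_comm _ (n : ℝ)]
      exact mul_le_mul_of_nonneg_left (le_abs_empDist2_sub_of_not_le hpx hxy.le (hxs x) hys)
        n.cast_nonneg
  have hvar : ∑ ys, (∏ i, q i (ys i)) * X ys ^ 2 ≤ n :=
    (sum_prod_mul_sq_card_filter_sub_le q hq0 hq S y).trans
      (by exact_mod_cast (Finset.card_le_univ S).trans_eq (Fintype.card_fin n))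
  calc ∑ ys with ¬ |empDist2 xs ys x y - p x y| ≤ ε * p x y, ∏ i, q i (ys i)
      ≤ ∑ ys with a ≤ |X ys|, ∏ i, q i (ys i) :=
        Finset.sum_le_sum_of_subset_of_nonneg
          (Finset.monotone_filter_right _ fun ys _ => hdev ys) fun ys _ _ => hQ0 ys
    _ ≤ (∑ ys, (∏ i, q i (ys i)) * X ys ^ 2) / a ^ 2 := sum_filter_le_abs_le_div_sq _ X hQ0 ha
    _ ≤ n / a ^ 2 := by gcongr
    _ = ((ε - ε') ^ 2 * p x y ^ 2)⁻¹ / n := by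
        rw [ha_def]
        field_simp

theorem one_sub_div_le_sum_indicator_typSet2 {p : 𝒳 → 𝒴 → ℝ} (hp0 : ∀ x y, 0 ≤ p x y)
    {ε ε' : ℝ} (hε' : 0 ≤ ε') (hε'ε : ε' < ε) (hn : 0 < n) {xs : Fin n → 𝒳}
    (hxs : xs ∈ typSet (margX p) ε' n) :
    1 - (∑ x, ∑ y, ((ε - ε') ^ 2 * p x y ^ 2)⁻¹) / n ≤ ∑ ys : Fin n → 𝒴,
      (typSet2 p ε n).indicator (fun q => ∏ i, condKernel p (q.1 i) (q.2 i)) (xs, ys) := by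
  classical
  set Q : (Fin n → 𝒴) → ℝ := fun ys => ∏ i, condKernel p (xs i) (ys i)
  have hX := pos_of_mem_typSet hε' hxs
  have hQ0 : ∀ ys, 0 ≤ Q ys := fun ys =>
    Finset.prod_nonneg fun i _ => div_nonneg (hp0 _ _) (hX i).le
  have hsplit : ∑ ys with (xs, ys) ∈ typSet2 p ε n, Q ys
      + ∑ ys with (xs, ys) ∉ typSet2 p ε n, Q ys = 1 := by
    rw [Finset.sum_filter_add_sum_filter_not]
    exact sum_prod_eq_one _ fun i => sum_condKernel (hX i)
  have hatyp : ∑ ys with (xs, ys) ∉ typSet2 p ε n, Q ys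
      ≤ ∑ z : 𝒳 × 𝒴, ∑ ys with ¬ |empDist2 xs ys z.1 z.2 - p z.1 z.2| ≤ ε * p z.1 z.2, Q ys := by
    refine (Finset.sum_le_sum_of_subset_of_nonneg (fun ys hys => ?_) fun ys _ _ => hQ0 ys).trans
      (sum_filter_not_forall_le Q hQ0 fun (z : 𝒳 × 𝒴) ys =>
        |empDist2 xs ys z.1 z.2 - p z.1 z.2| ≤ ε * p z.1 z.2)
    simpa [typSet2, Prod.forall] using hys
  have hcells : ∑ z : 𝒳 × 𝒴, ∑ ys with ¬ |empDist2 xs ys z.1 z.2 - p z.1 z.2| ≤ ε * p z.1 z.2,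
      Q ys ≤ (∑ x, ∑ y, ((ε - ε') ^ 2 * p x y ^ 2)⁻¹) / n := by
    rw [Fintype.sum_prod_type, Finset.sum_div]
    gcongr with x _
    rw [Finset.sum_div]
    gcongr with y _
    exact sum_prod_condKernel_not_typical_cell_le hp0 hε' hε'ε hn hxs x y
  have hind : ∑ ys : Fin n → 𝒴,
      (typSet2 p ε n).indicator (fun q => ∏ i, condKernel p (q.1 i) (q.2 i)) (xs, ys)
        = ∑ ys with (xs, ys) ∈ typSet2 p ε n, Q ys := by
    simp [Finset.sum_filter, Set.indicator_apply, Q]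
  linarith

end Typicality

/-- **Joint typicality lemma (lower bound).**
Let `(X,Y) ∼ p_{XY}` on finite sets `𝒳 × 𝒴`.  There exists `δ(ε)` with `δ(ε) → 0` as
`ε → 0⁺` such that, for all `0 < ε' < ε < 1`, every `x^n ∈ S_{ε'}^n(X)` and `Y^n` drawn
i.i.d. from the marginal `p_Y` (independently of `x^n`) satisfy
`P{(x^n, Y^n) ∈ S_ε^n(X,Y)} ≥ 2^{−n(I(X;Y)+δ(ε))}` for all sufficiently large `n`. -/
theorem joint_typicality_lemma
    {𝒳 𝒴 : Type*} [Fintype 𝒳] [Fintype 𝒴] [DecidableEq 𝒳] [DecidableEq 𝒴]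
    (p : 𝒳 → 𝒴 → ℝ) (hp : IsJoint p) :
    ∃ δ : ℝ → ℝ, Filter.Tendsto δ (nhdsWithin 0 (Set.Ioi 0)) (nhds 0) ∧
      ∀ ε : ℝ, 0 < ε → ε < 1 → ∀ ε' : ℝ, 0 < ε' → ε' < ε →
        ∃ N : ℕ, ∀ n ≥ N, ∀ xs ∈ typSet (margX p) ε' n,
          (2 : ℝ) ^ (-(n : ℝ) * (mutualInfo2 p + δ ε)) ≤
            ∑ ys : Fin n → 𝒴,
              Set.indicator (typSet2 p ε n) (fun q => ∏ i, margY p (q.2 i)) (xs, ys) := by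
  set L := ∑ x, ∑ y, p x y * |infoDensity p x y|
  refine ⟨fun ε => ε * (L + 1), ?_, fun ε hε _ ε' hε' hε'ε => ?_⟩
  · exact ((continuous_mul_const (L + 1)).tendsto' 0 0 (zero_mul _)).mono_left nhdsWithin_le_nhds
  set C := ∑ x, ∑ y, ((ε - ε') ^ 2 * p x y ^ 2)⁻¹
  obtain ⟨N, hN⟩ := Filter.eventually_atTop.1
    (((tendsto_natCast_atTop_atTop.atTop_mul_const hε).eventually_ge_atTop 1).and
      ((tendsto_const_div_atTop_nhds_zero_nat C).eventually (ge_mem_nhds one_half_pos)))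
  refine ⟨N, fun n hn xs hxs => ?_⟩
  obtain ⟨hnε, hC⟩ := hN n hn
  have hn0 : 0 < n := Nat.pos_of_ne_zero fun h => by norm_num [h] at hnε
  have hgap : (2 : ℝ) ^ (-(n : ℝ) * ε) ≤ 1 - C / n := calc
    (2 : ℝ) ^ (-(n : ℝ) * ε) ≤ 2 ^ (-1 : ℝ) :=
      Real.rpow_le_rpow_of_exponent_le one_le_two (by linarith)
    _ ≤ 1 - C / n := by norm_num; linarith
  calc (2 : ℝ) ^ (-(n : ℝ) * (mutualInfo2 p + ε * (L + 1)))
        = 2 ^ (-(n : ℝ) * (mutualInfo2 p + ε * L)) * 2 ^ (-(n : ℝ) * ε) := by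
        rw [← Real.rpow_add two_pos]
        ring_nf
    _ ≤ 2 ^ (-(n : ℝ) * (mutualInfo2 p + ε * L)) * ∑ ys : Fin n → 𝒴,
          (typSet2 p ε n).indicator (fun q => ∏ i, condKernel p (q.1 i) (q.2 i)) (xs, ys) := by
        gcongr
        exact hgap.trans (one_sub_div_le_sum_indicator_typSet2 hp.1 hε'.le hε'ε hn0 hxs)
    _ ≤ _ := by
        rw [Finset.mul_sum]
        refine Finset.sum_le_sum fun ys _ => ?_
        by_cases h : (xs, ys) ∈ typSet2 p ε n
        · rw [Set.indicator_of_mem h, Set.indicator_of_mem h]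
          exact rpow_mul_prod_condKernel_le_prod_margY hp.1 hε.le h
        · simp [Set.indicator_of_notMem h]
end
end

section
/- (Donsker–Varadhan / MINE representation of mutual information on finite spaces.) Let U, V be random variables on finite sets 𝒰, 𝒱 with joint distribution p_{UV} and marginals p_U, p_V. Then I(U;V) = sup over all functions γ: 𝒰×𝒱 → ℝ of { E_{(u,v)∼p_{UV}}[γ(u,v)] − log E_{(u,v)∼p_U⊗p_V}[exp(γ(u,v))] }. -/
open Finset

noncomputable section

variable {𝒳 𝒴 : Type*} [Fintype 𝒳] [Fintype 𝒴]

/-!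
Mutual information is `KL(p_{UV} ‖ p_U ⊗ p_V)`, so this is the Donsker–Varadhan formula
`KL(p ‖ q) = sup_γ (E_p γ - log E_q e^γ)`. The bound `≤ KL` is Gibbs' inequality for `p`
against the tilted distribution `q e^γ / E_q e^γ`; conversely `γ = log (p / q + ε)` tilts `q`
to `p + ε q`, and so comes within `log (1 + ε) ≤ ε` of `KL(p ‖ q)`.
-/

open Real

section DonskerVaradhan

variable {A : Type*} [Fintype A]

lemma mul_log_div_le_sub {x y : ℝ} (hx : 0 ≤ x) (hy : 0 ≤ y) (hxy : y = 0 → x = 0) :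
    x * log (y / x) ≤ y - x := by
  rcases hx.eq_or_lt with rfl | hx
  · simpa using hy
  have hy : 0 < y := hy.lt_of_ne fun h => hx.ne' (hxy h.symm)
  calc x * log (y / x) ≤ x * (y / x - 1) :=
        mul_le_mul_of_nonneg_left (log_le_sub_one_of_pos (div_pos hy hx)) hx.le
    _ = y - x := by field_simp

lemma sum_mul_log_div_le {p r : A → ℝ} (hp : ∀ a, 0 ≤ p a) (hr : ∀ a, 0 ≤ r a)
    (hpr : ∀ a, r a = 0 → p a = 0) :
    ∑ a, p a * log (r a / p a) ≤ ∑ a, r a - ∑ a, p a := by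
  rw [← sum_sub_distrib]
  exact sum_le_sum fun a _ => mul_log_div_le_sub (hp a) (hr a) (hpr a)

def dvFunctional (p q γ : A → ℝ) : ℝ :=
  ∑ a, p a * γ a - log (∑ a, q a * exp (γ a))

lemma dvFunctional_le_klDiv {p q : A → ℝ} (hp : IsDist p) (hq : ∀ a, 0 ≤ q a)
    (hpq : ∀ a, q a = 0 → p a = 0) (γ : A → ℝ) : dvFunctional p q γ ≤ klDiv p q := by
  set S := ∑ a, q a * exp (γ a)
  have hS : 0 < S := by
    obtain ⟨a, -, ha⟩ := exists_ne_zero_of_sum_ne_zero (hp.2.trans_ne one_ne_zero)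
    have hqa : 0 < q a := (hq a).lt_of_ne fun h => ha (hpq a h.symm)
    exact (mul_pos hqa (exp_pos _)).trans_le <|
      single_le_sum (fun b _ => mul_nonneg (hq b) (exp_pos _).le) (mem_univ a)
  set r : A → ℝ := fun a => q a * exp (γ a) / S
  have hr : ∀ a, 0 ≤ r a := fun a => div_nonneg (mul_nonneg (hq a) (exp_pos _).le) hS.le
  have hr_sum : ∑ a, r a = 1 := by rw [← sum_div, div_self hS.ne']
  have hpr : ∀ a, r a = 0 → p a = 0 := fun a h => hpq a <| by
    simpa [r, hS.ne', (exp_pos _).ne'] using h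
  have tilt : ∀ a, p a * γ a - p a * log (p a / q a) - p a * log S = p a * log (r a / p a) := by
    intro a
    rcases (hp.1 a).eq_or_lt with h | hpa
    · simp [← h]
    have hqa : 0 < q a := (hq a).lt_of_ne fun h => hpa.ne' (hpq a h.symm)
    simp only [r, log_div (div_pos (mul_pos hqa (exp_pos _)) hS).ne' hpa.ne',
      log_div (mul_pos hqa (exp_pos _)).ne' hS.ne', log_mul hqa.ne' (exp_pos _).ne', log_exp,
      log_div hpa.ne' hqa.ne']
    ring
  have gibbs := sum_mul_log_div_le hp.1 hr hpr
  simp only [← tilt, sum_sub_distrib, ← sum_mul, hp.2, hr_sum, one_mul] at gibbs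
  unfold dvFunctional klDiv
  linarith

lemma exists_klDiv_sub_le_dvFunctional {p q : A → ℝ} (hp : IsDist p) (hq : IsDist q)
    (hpq : ∀ a, q a = 0 → p a = 0) {ε : ℝ} (hε : 0 < ε) :
    ∃ γ, klDiv p q - ε ≤ dvFunctional p q γ := by
  have hγ : ∀ a, 0 < p a / q a + ε := fun a =>
    add_pos_of_nonneg_of_pos (div_nonneg (hp.1 a) (hq.1 a)) hε
  refine ⟨fun a => log (p a / q a + ε), ?_⟩
  have tilt : ∀ a, q a * exp (log (p a / q a + ε)) = p a + ε * q a := by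
    intro a
    rw [exp_log (hγ a)]
    rcases (hq.1 a).eq_or_lt with h | hqa
    · simp [← h, hpq a h.symm]
    · field_simp
  have mean : ∑ a, p a * log (p a / q a) ≤ ∑ a, p a * log (p a / q a + ε) := by
    refine sum_le_sum fun a _ => ?_
    rcases (hp.1 a).eq_or_lt with h | hpa
    · simp [← h]
    have hqa : 0 < q a := (hq.1 a).lt_of_ne fun h => hpa.ne' (hpq a h.symm)
    exact mul_le_mul_of_nonneg_left
      (log_le_log (div_pos hpa hqa) (lt_add_of_pos_right _ hε).le) hpa.le
  have hlog : log (1 + ε) ≤ ε := by linarith [log_le_sub_one_of_pos (by linarith : 0 < 1 + ε)]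
  simp only [dvFunctional, tilt, sum_add_distrib, ← mul_sum, hp.2, hq.2, mul_one]
  unfold klDiv
  linarith

theorem klDiv_eq_iSup_dvFunctional {p q : A → ℝ} (hp : IsDist p) (hq : IsDist q)
    (hpq : ∀ a, q a = 0 → p a = 0) : klDiv p q = ⨆ γ, dvFunctional p q γ := by
  have hbdd : BddAbove (Set.range (dvFunctional p q)) :=
    ⟨klDiv p q, Set.forall_mem_range.2 (dvFunctional_le_klDiv hp hq.1 hpq)⟩
  refine le_antisymm (le_of_forall_sub_le fun ε hε => ?_)
    (ciSup_le (dvFunctional_le_klDiv hp hq.1 hpq))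
  obtain ⟨γ, hγ⟩ := exists_klDiv_sub_le_dvFunctional hp hq hpq hε
  exact hγ.trans (le_ciSup hbdd γ)

end DonskerVaradhan

section MutualInformation

variable {𝒰 𝒱 : Type*} [Fintype 𝒰] [Fintype 𝒱] {p : 𝒰 → 𝒱 → ℝ}

lemma IsJoint.isDist_uncurry (hp : IsJoint p) : IsDist (Function.uncurry p) :=
  ⟨fun z => hp.1 z.1 z.2, by rw [Fintype.sum_prod_type]; exact hp.2⟩

lemma IsJoint.isDist_margX_mul_margY (hp : IsJoint p) :
    IsDist fun z : 𝒰 × 𝒱 => margX p z.1 * margY p z.2 := by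
  refine ⟨fun z => mul_nonneg (sum_nonneg fun _ _ => hp.1 _ _) (sum_nonneg fun _ _ => hp.1 _ _),
    ?_⟩
  rw [Fintype.sum_prod_type, ← sum_mul_sum]
  simp only [margX, margY]
  rw [sum_comm (f := fun x y => p y x), hp.2, one_mul]

lemma IsJoint.eq_zero_of_margX_mul_margY_eq_zero (hp : IsJoint p) {u : 𝒰} {v : 𝒱}
    (h : margX p u * margY p v = 0) : p u v = 0 := by
  rcases mul_eq_zero.1 h with h | h
  · exact (sum_eq_zero_iff_of_nonneg fun _ _ => hp.1 _ _).1 h v (mem_univ v)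
  · exact (sum_eq_zero_iff_of_nonneg fun _ _ => hp.1 _ _).1 h u (mem_univ u)

lemma mutualInfo_eq_klDiv :
    mutualInfo p = klDiv (Function.uncurry p) fun z => margX p z.1 * margY p z.2 := by
  rw [klDiv, Fintype.sum_prod_type]
  rfl

end MutualInformation

/-- **Donsker–Varadhan / MINE representation of mutual information on finite spaces.**
Let `U, V` be random variables on finite sets `𝒰, 𝒱` with joint distribution `p_{UV}` and
marginals `p_U, p_V`.  Then
`I(U;V) = sup_{γ : 𝒰×𝒱 → ℝ} { E_{(u,v) ∼ p_{UV}}[γ(u,v)] − log E_{(u,v) ∼ p_U⊗p_V}[exp(γ(u,v))] }`. -/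
theorem donsker_varadhan_mine
    {𝒰 𝒱 : Type*} [Fintype 𝒰] [Fintype 𝒱]
    (p : 𝒰 → 𝒱 → ℝ) (hp : IsJoint p) :
    mutualInfo p =
      ⨆ γ : 𝒰 × 𝒱 → ℝ,
        ((∑ u, ∑ v, p u v * γ (u, v)) -
          Real.log (∑ u, ∑ v, (margX p u * margY p v) * Real.exp (γ (u, v)))) := by
  rw [mutualInfo_eq_klDiv, klDiv_eq_iSup_dvFunctional hp.isDist_uncurry
    hp.isDist_margX_mul_margY fun z => hp.eq_zero_of_margX_mul_margY_eq_zero]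
  simp only [dvFunctional, Fintype.sum_prod_type]
  rfl
end
end
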